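/- Fix an integer m ≥ 1 and real constants D ≥ 1. For integers n ≥ 2 define T_n(m) = (1/2)·Γ(m+1)^{n−2}/Γ(2m+1)^{n−1} · ((2π)^n (n!)²/n^{2n})^m · (11/5)^n + Σ_{j=1}^{m−1} (1/j!)·((2π)^n (n!)²/n^{2n})^j · (Γ(2m+1−j)/Γ(2m+1))^{n−1} · (ζ(1/2 + m − j)/ζ(1/2 + m))^{2n}. Then for each fixed m ≥ 8, T_n(m) is nonincreasing as a function of n ≥ 2, because each summand is nonincreasing in n. -/

import Mathlib

open Real

/-- The Riemann zeta function on real arguments s > 1, given by its Dirichlet series. -/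
noncomputable def realZeta (s : ℝ) : ℝ := ∑' n : ℕ, ((n : ℝ) + 1) ^ (-s)

/-- The bound Tₙ(m) for |Q_f(z) − z^m| on the unit circle. -/
noncomputable def T (n m : ℕ) : ℝ :=
  1 / 2 * Real.Gamma ((m : ℝ) + 1) ^ (n - 2) / Real.Gamma (2 * (m : ℝ) + 1) ^ (n - 1) *
      ((2 * Real.pi) ^ n * ((n.factorial : ℝ)) ^ 2 / (n : ℝ) ^ (2 * n)) ^ m * (11 / 5) ^ n
  + ∑ j ∈ Finset.Icc 1 (m - 1),
      (1 / (j.factorial : ℝ)) *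
        ((2 * Real.pi) ^ n * ((n.factorial : ℝ)) ^ 2 / (n : ℝ) ^ (2 * n)) ^ j *
        (Real.Gamma (2 * (m : ℝ) + 1 - (j : ℝ)) / Real.Gamma (2 * (m : ℝ) + 1)) ^ (n - 1) *
        (realZeta (1 / 2 + (m : ℝ) - (j : ℝ)) / realZeta (1 / 2 + (m : ℝ))) ^ (2 * n)

/-!
Write `cₙ = (2π)ⁿ (n!)² / n²ⁿ`. Since `(1 + 1/n)²ⁿ ≥ 4`, we have `cₙ₊₁ ≤ (π/2) cₙ`. Hence going
from `n` to `n + 1` multiplies the leading term of `Tₙ(m)` by at most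
`(11/5) (π/2)ᵐ Γ(m+1) / Γ(2m+1)`, and the `j`-th summand by at most
`9 (π/2)ʲ Γ(2m+1-j) / Γ(2m+1)`, because `ζ ≤ 3` on `[3/2, ∞)`. Both factors are `≤ 1` by
`Γ(a) aᵏ ≤ Γ(a + k)`, which gives `Γ(2m+1) ≥ (m+1)ᵐ Γ(m+1)` and
`Γ(2m+1) ≥ 2m (2m+1-j)ʲ⁻¹ Γ(2m+1-j)`.
-/

open Finset

namespace Real

theorem Gamma_mul_pow_le_Gamma_add_nat {a : ℝ} (ha : 0 < a) (k : ℕ) :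
    Gamma a * a ^ k ≤ Gamma (a + k) := by
  induction k with
  | zero => simp
  | succ k ih =>
    have hak : 0 < a + k := by positivity
    calc Gamma a * a ^ (k + 1) = Gamma a * a ^ k * a := pow_succ a k ▸ (mul_assoc _ _ _).symm
      _ ≤ Gamma (a + k) * (a + k) :=
          mul_le_mul ih (le_add_of_nonneg_right k.cast_nonneg) ha.le (Gamma_pos_of_pos hak).le
      _ = Gamma (a + (k + 1 : ℕ)) := by
          rw [Nat.cast_succ, ← add_assoc, Gamma_add_one hak.ne', mul_comm]

end Real

theorem rpow_neg_three_halves_le_sub {x : ℝ} (hx : 0 < x) :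
    (x + 1) ^ (-(3 / 2) : ℝ) ≤ 2 / √x - 2 / √(x + 1) := by
  set a := √x
  set b := √(x + 1)
  have ha : 0 < a := sqrt_pos.mpr hx
  have hb : 0 < b := sqrt_pos.mpr (by linarith)
  have hab : a ≤ b := sqrt_le_sqrt (by linarith)
  have hb2 : b ^ 2 = x + 1 := sq_sqrt (by linarith)
  have hba : (b - a) * (a + b) = 1 := by nlinarith [sq_sqrt hx.le]
  have hpow : (x + 1) ^ (-(3 / 2) : ℝ) = 1 / b ^ 3 := by
    rw [← hb2, ← rpow_natCast b 2, ← rpow_mul hb.le,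
      show ((2 : ℕ) : ℝ) * -(3 / 2) = -((3 : ℕ) : ℝ) by norm_num, rpow_neg hb.le, rpow_natCast,
      one_div]
  have hcube : a * b * (a + b) ≤ 2 * b ^ 3 := by nlinarith
  -- `(b - a)(a + b) = 1`, so `2/a - 2/b = 2/(ab(a + b)) ≥ 1/b³`
  have hprod : a * b = (b - a) * (a * b * (a + b)) := by linear_combination (-(a * b)) * hba
  rw [hpow, div_sub_div _ _ ha.ne' hb.ne', div_le_div_iff₀ (by positivity) (by positivity)]
  nlinarith [mul_le_mul_of_nonneg_left hcube (sub_nonneg.2 hab)]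

theorem sum_range_rpow_neg_three_halves_le (N : ℕ) :
    ∑ i ∈ range N, ((i : ℝ) + 1) ^ (-(3 / 2) : ℝ) ≤ 3 - 2 / √N := by
  induction N with
  | zero => simp
  | succ k ih =>
    rw [sum_range_succ]
    rcases Nat.eq_zero_or_pos k with rfl | hk
    · norm_num
    · have := rpow_neg_three_halves_le_sub (x := k) (by exact_mod_cast hk)
      push_cast
      linarith

theorem realZeta_nonneg (s : ℝ) : 0 ≤ realZeta s :=
  tsum_nonneg fun _ => rpow_nonneg (by positivity) _

theorem one_le_realZeta {s : ℝ} (hs : 1 < s) : 1 ≤ realZeta s := by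
  have hsum : Summable fun n : ℕ => ((n : ℝ) + 1) ^ (-s) := by
    simpa using (summable_nat_add_iff 1).mpr (summable_nat_rpow.mpr (neg_lt_neg hs))
  simpa [realZeta] using hsum.le_tsum 0 fun i _ => rpow_nonneg (by positivity) _

theorem realZeta_le_three {s : ℝ} (hs : 3 / 2 ≤ s) : realZeta s ≤ 3 := by
  refine tsum_le_of_sum_range_le (fun _ => rpow_nonneg (by positivity) _) fun N => ?_
  calc ∑ i ∈ range N, ((i : ℝ) + 1) ^ (-s)
      ≤ ∑ i ∈ range N, ((i : ℝ) + 1) ^ (-(3 / 2) : ℝ) := by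
        gcongr
        linarith
    _ ≤ 3 - 2 / √N := sum_range_rpow_neg_three_halves_le N
    _ ≤ 3 := by linarith [show 0 ≤ 2 / √(N : ℝ) by positivity]

theorem realZeta_div_realZeta_le_three {s t : ℝ} (hs : 3 / 2 ≤ s) (ht : 1 < t) :
    realZeta s / realZeta t ≤ 3 :=
  (div_le_self (realZeta_nonneg s) (one_le_realZeta ht)).trans (realZeta_le_three hs)

theorem two_mul_pow_le_add_one_pow {n : ℕ} (hn : 1 ≤ n) :
    2 * (n : ℝ) ^ n ≤ ((n : ℝ) + 1) ^ n := by
  have hn0 : (0 : ℝ) < n := by exact_mod_cast hn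
  have hbern := one_add_mul_le_pow (a := 1 / (n : ℝ)) (by linarith [one_div_pos.2 hn0]) n
  rw [mul_one_div_cancel hn0.ne', one_add_one_eq_two] at hbern
  calc 2 * (n : ℝ) ^ n ≤ (1 + 1 / n) ^ n * n ^ n := by gcongr
    _ = ((n : ℝ) + 1) ^ n := by rw [← mul_pow]; field_simp

noncomputable def stirlingQuotient (n : ℕ) : ℝ :=
  (2 * π) ^ n * (n.factorial : ℝ) ^ 2 / (n : ℝ) ^ (2 * n)

theorem stirlingQuotient_nonneg (n : ℕ) : 0 ≤ stirlingQuotient n := by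
  unfold stirlingQuotient; positivity

theorem stirlingQuotient_succ_le {n : ℕ} (hn : 1 ≤ n) :
    stirlingQuotient (n + 1) ≤ π / 2 * stirlingQuotient n := by
  have hn0 : (0 : ℝ) < n := by exact_mod_cast hn
  have hfour : 4 * (n : ℝ) ^ (2 * n) ≤ ((n : ℝ) + 1) ^ (2 * n) := by
    have := two_mul_pow_le_add_one_pow hn
    rw [pow_mul', pow_mul' ((n : ℝ) + 1)]
    nlinarith [pow_pos hn0 n]
  calc stirlingQuotient (n + 1)
      = 2 * π * ((2 * π) ^ n * (n.factorial : ℝ) ^ 2) / ((n : ℝ) + 1) ^ (2 * n) := by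
        rw [stirlingQuotient, Nat.factorial_succ]
        push_cast
        field_simp
        ring
    _ ≤ 2 * π * ((2 * π) ^ n * (n.factorial : ℝ) ^ 2) / (4 * (n : ℝ) ^ (2 * n)) := by gcongr
    _ = π / 2 * stirlingQuotient n := by
        rw [stirlingQuotient]
        field_simp
        ring

theorem Gamma_mul_pi_div_two_pow_le {m : ℕ} (hm : 2 ≤ m) :
    11 / 5 * (π / 2) ^ m * Gamma ((m : ℝ) + 1) ≤ Gamma (2 * (m : ℝ) + 1) := by
  have hm' : (2 : ℝ) ≤ m := by exact_mod_cast hm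
  have hGamma := Gamma_mul_pow_le_Gamma_add_nat (a := (m : ℝ) + 1) (by positivity) m
  rw [show (m : ℝ) + 1 + m = 2 * m + 1 by ring] at hGamma
  have hcoeff : 11 / 5 * (π / 2) ^ m ≤ ((m : ℝ) + 1) ^ m :=
    calc 11 / 5 * (π / 2) ^ m ≤ (3 / 2) ^ m * (π / 2) ^ m := by
          gcongr
          calc (11 / 5 : ℝ) ≤ (3 / 2) ^ 2 := by norm_num
            _ ≤ (3 / 2) ^ m := pow_le_pow_right₀ (by norm_num) hm
      _ = (3 * π / 4) ^ m := by rw [← mul_pow]; ring_nf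
      _ ≤ ((m : ℝ) + 1) ^ m := by gcongr; linarith [pi_lt_four]
  calc 11 / 5 * (π / 2) ^ m * Gamma ((m : ℝ) + 1)
      ≤ ((m : ℝ) + 1) ^ m * Gamma ((m : ℝ) + 1) := by gcongr
    _ ≤ Gamma (2 * (m : ℝ) + 1) := by rw [mul_comm]; exact hGamma

theorem Gamma_mul_nine_mul_pi_div_two_pow_le {m j : ℕ} (hm : 8 ≤ m) (hj : 1 ≤ j) (hjm : j < m) :
    9 * (π / 2) ^ j * Gamma (2 * (m : ℝ) + 1 - j) ≤ Gamma (2 * (m : ℝ) + 1) := by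
  obtain ⟨i, rfl⟩ : ∃ i, j = i + 1 := ⟨j - 1, by omega⟩
  have hm' : (8 : ℝ) ≤ m := by exact_mod_cast hm
  have hi : (i : ℝ) + 2 ≤ m := by exact_mod_cast hjm
  rw [show 2 * (m : ℝ) + 1 - (i + 1 : ℕ) = 2 * m - i by push_cast; ring]
  set a : ℝ := 2 * m - i
  have hGamma := Gamma_mul_pow_le_Gamma_add_nat (a := a) (by linarith) i
  rw [sub_add_cancel] at hGamma
  have hcoeff : 9 * (π / 2) ^ (i + 1) ≤ 2 * m * a ^ i := by
    rw [pow_succ, mul_comm _ (π / 2), ← mul_assoc]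
    exact mul_le_mul (by linarith [pi_lt_d2]) (pow_le_pow_left₀ (by positivity)
      (by linarith [pi_lt_four]) i) (by positivity) (by positivity)
  calc 9 * (π / 2) ^ (i + 1) * Gamma a ≤ 2 * m * a ^ i * Gamma a := by
        gcongr; exact (Gamma_pos_of_pos (by linarith)).le
    _ ≤ 2 * m * Gamma (2 * m) := by
        rw [mul_assoc, mul_comm (a ^ i)]
        gcongr
    _ = Gamma (2 * (m : ℝ) + 1) := (Gamma_add_one (by positivity)).symm

noncomputable def leadingTerm (n m : ℕ) : ℝ :=
  1 / 2 * Gamma ((m : ℝ) + 1) ^ (n - 2) / Gamma (2 * (m : ℝ) + 1) ^ (n - 1) *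
    stirlingQuotient n ^ m * (11 / 5) ^ n

noncomputable def summand (n m j : ℕ) : ℝ :=
  1 / (j.factorial : ℝ) * stirlingQuotient n ^ j *
    (Gamma (2 * (m : ℝ) + 1 - j) / Gamma (2 * (m : ℝ) + 1)) ^ (n - 1) *
    (realZeta (1 / 2 + (m : ℝ) - j) / realZeta (1 / 2 + (m : ℝ))) ^ (2 * n)

theorem T_eq_leadingTerm_add_sum (n m : ℕ) :
    T n m = leadingTerm n m + ∑ j ∈ Icc 1 (m - 1), summand n m j := rfl

theorem leadingTerm_succ_le {n m : ℕ} (hn : 2 ≤ n) (hm : 2 ≤ m) :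
    leadingTerm (n + 1) m ≤ leadingTerm n m := by
  obtain ⟨k, rfl⟩ : ∃ k, n = k + 2 := ⟨n - 2, by omega⟩
  unfold leadingTerm
  rw [show k + 2 + 1 - 2 = k + 1 by omega, show k + 2 + 1 - 1 = k + 2 by omega,
    show k + 2 - 2 = k by omega, show k + 2 - 1 = k + 1 by omega]
  set G₁ := Gamma ((m : ℝ) + 1)
  set G₂ := Gamma (2 * (m : ℝ) + 1)
  set c := stirlingQuotient (k + 2)
  have hG₂ : 0 < G₂ := by positivity
  have hc : 0 ≤ c := stirlingQuotient_nonneg _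
  have hratio : 11 / 5 * (π / 2) ^ m * G₁ / G₂ ≤ 1 :=
    (div_le_one hG₂).2 (Gamma_mul_pi_div_two_pow_le hm)
  calc 1 / 2 * G₁ ^ (k + 1) / G₂ ^ (k + 2) * stirlingQuotient (k + 2 + 1) ^ m *
        (11 / 5) ^ (k + 2 + 1)
      ≤ 1 / 2 * G₁ ^ (k + 1) / G₂ ^ (k + 2) * (π / 2 * c) ^ m * (11 / 5) ^ (k + 2 + 1) := by
        gcongr
        · exact stirlingQuotient_nonneg _
        · exact stirlingQuotient_succ_le (by omega)
    _ = 1 / 2 * G₁ ^ k / G₂ ^ (k + 1) * c ^ m * (11 / 5) ^ (k + 2) *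
          (11 / 5 * (π / 2) ^ m * G₁ / G₂) := by
        field_simp
        ring
    _ ≤ 1 / 2 * G₁ ^ k / G₂ ^ (k + 1) * c ^ m * (11 / 5) ^ (k + 2) :=
        mul_le_of_le_one_right (by positivity) hratio

theorem summand_succ_le {n m j : ℕ} (hn : 1 ≤ n) (hm : 8 ≤ m) (hj : 1 ≤ j) (hjm : j < m) :
    summand (n + 1) m j ≤ summand n m j := by
  obtain ⟨k, rfl⟩ : ∃ k, n = k + 1 := ⟨n - 1, by omega⟩
  have hm' : (8 : ℝ) ≤ m := by exact_mod_cast hm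
  have hjm' : (j : ℝ) + 1 ≤ m := by exact_mod_cast hjm
  unfold summand
  rw [show k + 1 + 1 - 1 = k + 1 by omega, Nat.add_sub_cancel]
  set r := Gamma (2 * (m : ℝ) + 1 - j) / Gamma (2 * (m : ℝ) + 1)
  set z := realZeta (1 / 2 + (m : ℝ) - j) / realZeta (1 / 2 + (m : ℝ))
  set c := stirlingQuotient (k + 1)
  have hr : 0 ≤ r := div_nonneg (Gamma_pos_of_pos (by linarith)).le (by positivity)
  have hz : 0 ≤ z := div_nonneg (realZeta_nonneg _) (realZeta_nonneg _)
  have hc : 0 ≤ c := stirlingQuotient_nonneg _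
  have hratio : (π / 2) ^ j * r * z ^ 2 ≤ 1 :=
    calc (π / 2) ^ j * r * z ^ 2 ≤ (π / 2) ^ j * r * 3 ^ 2 := by
          gcongr
          exact realZeta_div_realZeta_le_three (by linarith) (by linarith)
      _ = 9 * (π / 2) ^ j * Gamma (2 * (m : ℝ) + 1 - j) / Gamma (2 * (m : ℝ) + 1) := by
          simp only [r]; ring
      _ ≤ 1 := (div_le_one (by positivity)).2 (Gamma_mul_nine_mul_pi_div_two_pow_le hm hj hjm)
  calc 1 / (j.factorial : ℝ) * stirlingQuotient (k + 1 + 1) ^ j * r ^ (k + 1) *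
        z ^ (2 * (k + 1 + 1))
      ≤ 1 / (j.factorial : ℝ) * (π / 2 * c) ^ j * r ^ (k + 1) * z ^ (2 * (k + 1 + 1)) := by
        gcongr
        · exact stirlingQuotient_nonneg _
        · exact stirlingQuotient_succ_le (by omega)
    _ = 1 / (j.factorial : ℝ) * c ^ j * r ^ k * z ^ (2 * (k + 1)) *
          ((π / 2) ^ j * r * z ^ 2) := by
        ring
    _ ≤ 1 / (j.factorial : ℝ) * c ^ j * r ^ k * z ^ (2 * (k + 1)) :=
        mul_le_of_le_one_right (by positivity) hratio

/-- For each fixed m ≥ 8, Tₙ(m) is nonincreasing as a function of n ≥ 2. -/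
theorem stmt_16 (m : ℕ) (hm : 8 ≤ m) :
    ∀ n : ℕ, 2 ≤ n → T (n + 1) m ≤ T n m := by
  intro n hn
  rw [T_eq_leadingTerm_add_sum, T_eq_leadingTerm_add_sum]
  gcongr with j hj
  · exact leadingTerm_succ_le hn (by omega)
  · obtain ⟨hj1, hjm⟩ := mem_Icc.1 hj
    exact summand_succ_le (by omega) hm hj1 (by omega)
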